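/- arXiv:1610.02461 — 4 statements merged into one kernel-verified Lean document; each statement's English description precedes it below -/
import Mathlib

section
/- Let a, T > 0, φ : ℝ → (-a,a) a homeomorphism with φ(0)=0, and f : [0,T]×ℝ×ℝ → ℝ continuous. Assume: (1) there are M₁ < M₂ such that for every u ∈ C¹([0,T]), if min u' ≥ M₂ then ∫₀ᵀ f(t,u(t),u'(t))dt ≠ 0, and if max u' ≤ M₁ then ∫₀ᵀ f(t,u(t),u'(t))dt ≠ 0. If u ∈ C¹ solves (φ(u'))' = λ N_f(u) + (1-λ)Q(N_f(u)) with u(0)=u'(0)=u'(T) for some λ ∈ [0,1], then there exists ω ∈ [0,T] with M₁ < u'(ω) < M₂. -/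
/-! Integrating `(φ(u'))' = λ N_f(u) + (1 - λ) Q(N_f(u))` over `[0, T]` gives
`φ(u'(T)) - φ(u'(0)) = ∫₀ᵀ f(t, u, u')`, so the periodicity `u'(0) = u'(T)` forces that integral
to vanish. If `u'` never entered `(M₁, M₂)`, the intermediate value theorem would put `u'` entirely
above `M₂` or entirely below `M₁`, and condition (1) says the integral is then nonzero. -/

open MeasureTheory intervalIntegral Set

theorem integral_eq_zero_of_hasDerivAt_of_eq {F F' : ℝ → ℝ} {a b : ℝ}
    (hderiv : ∀ t ∈ uIcc a b, HasDerivAt F (F' t) t) (hint : IntervalIntegrable F' volume a b)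
    (hab : F a = F b) : ∫ t in a..b, F' t = 0 := by
  rw [integral_eq_sub_of_hasDerivAt hderiv hint, hab, sub_self]

theorem integral_mul_add_one_sub_mul_average {g : ℝ → ℝ} {T : ℝ} (hT : T ≠ 0)
    (hg : IntervalIntegrable g volume 0 T) (lam : ℝ) :
    ∫ t in (0:ℝ)..T, (lam * g t + (1 - lam) * ((1 / T) * ∫ s in (0:ℝ)..T, g s)) =
      ∫ t in (0:ℝ)..T, g t := by
  rw [integral_add (hg.const_mul lam) intervalIntegrable_const, intervalIntegral.integral_const_mul,
    intervalIntegral.integral_const, smul_eq_mul, sub_zero]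
  field_simp
  ring

theorem forall_le_or_forall_ge_of_forall_notMem_Ioo {s : Set ℝ} {w : ℝ → ℝ} {M₁ M₂ : ℝ}
    (hs : IsPreconnected s) (hw : ContinuousOn w s) (hM : M₁ < M₂)
    (hgap : ∀ t ∈ s, w t ∉ Ioo M₁ M₂) :
    (∀ t ∈ s, w t ≤ M₁) ∨ (∀ t ∈ s, M₂ ≤ w t) := by
  by_contra! ⟨⟨t₁, ht₁, hlow⟩, ⟨t₂, ht₂, hhigh⟩⟩
  have hgap₁ : M₂ ≤ w t₁ := le_of_not_gt fun h => hgap t₁ ht₁ ⟨hlow, h⟩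
  have hgap₂ : w t₂ ≤ M₁ := le_of_not_gt fun h => hgap t₂ ht₂ ⟨h, hhigh⟩
  obtain ⟨t, ht, hmid⟩ := hs.intermediate_value ht₂ ht₁ hw
    (⟨by linarith, by linarith⟩ : (M₁ + M₂) / 2 ∈ Icc (w t₂) (w t₁))
  exact hgap t ht (hmid ▸ ⟨by linarith, by linarith⟩)

theorem stmt_4_general (T : ℝ) (hT : 0 < T)
    (φ : ℝ → ℝ)
    (f : ℝ → ℝ → ℝ → ℝ)
    (hf : Continuous fun p : ℝ × ℝ × ℝ => f p.1 p.2.1 p.2.2)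
    (M₁ M₂ : ℝ) (hM : M₁ < M₂)
    -- condition (1)
    (h1 : ∀ v : ℝ → ℝ, ContDiff ℝ 1 v → (∀ t ∈ Set.Icc (0:ℝ) T, M₂ ≤ deriv v t) →
      (∫ t in (0:ℝ)..T, f t (v t) (deriv v t)) ≠ 0)
    (h2 : ∀ v : ℝ → ℝ, ContDiff ℝ 1 v → (∀ t ∈ Set.Icc (0:ℝ) T, deriv v t ≤ M₁) →
      (∫ t in (0:ℝ)..T, f t (v t) (deriv v t)) ≠ 0)
    (lam : ℝ)
    (u : ℝ → ℝ) (hu : ContDiff ℝ 1 u)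
    (Qv : ℝ) (hQv : Qv = (1 / T) * ∫ t in (0:ℝ)..T, f t (u t) (deriv u t))
    (heq : ∀ t ∈ Set.Icc (0:ℝ) T,
      HasDerivAt (fun s => φ (deriv u s))
        (lam * f t (u t) (deriv u t) + (1 - lam) * Qv) t)
    (hbc2 : deriv u 0 = deriv u T) :
    ∃ ω ∈ Set.Icc (0:ℝ) T, M₁ < deriv u ω ∧ deriv u ω < M₂ := by
  have hu' : Continuous (deriv u) := hu.continuous_deriv le_rfl
  have hN : Continuous fun t => f t (u t) (deriv u t) :=
    hf.comp (continuous_id.prodMk (hu.continuous.prodMk hu'))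
  have hI : ∫ t in (0:ℝ)..T, f t (u t) (deriv u t) = 0 := by
    rw [← integral_mul_add_one_sub_mul_average hT.ne' (hN.intervalIntegrable 0 T) lam, ← hQv]
    refine integral_eq_zero_of_hasDerivAt_of_eq (F := fun s => φ (deriv u s))
      (by rwa [uIcc_of_le hT.le]) ?_ (congrArg φ hbc2)
    exact ((continuous_const.mul hN).add continuous_const).intervalIntegrable 0 T
  by_contra! hgap
  rcases forall_le_or_forall_ge_of_forall_notMem_Ioo isPreconnected_Icc hu'.continuousOn hM
      (fun t ht hmem => (hgap t ht hmem.1).not_gt hmem.2) with hlow | hhigh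
  · exact h2 u hu hlow hI
  · exact h1 u hu hhigh hI

theorem stmt_4 (a T : ℝ) (ha : 0 < a) (hT : 0 < T)
    (φ ψ : ℝ → ℝ) (hφc : Continuous φ) (hψc : Continuous ψ)
    (hmem : ∀ x, φ x ∈ Set.Ioo (-a) a)
    (hinv1 : ∀ x, ψ (φ x) = x)
    (hinv2 : ∀ y ∈ Set.Ioo (-a) a, φ (ψ y) = y)
    (hφ0 : φ 0 = 0)
    (f : ℝ → ℝ → ℝ → ℝ)
    (hf : Continuous fun p : ℝ × ℝ × ℝ => f p.1 p.2.1 p.2.2)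
    (M₁ M₂ : ℝ) (hM : M₁ < M₂)
    -- condition (1)
    (h1 : ∀ v : ℝ → ℝ, ContDiff ℝ 1 v → (∀ t ∈ Set.Icc (0:ℝ) T, M₂ ≤ deriv v t) →
      (∫ t in (0:ℝ)..T, f t (v t) (deriv v t)) ≠ 0)
    (h2 : ∀ v : ℝ → ℝ, ContDiff ℝ 1 v → (∀ t ∈ Set.Icc (0:ℝ) T, deriv v t ≤ M₁) →
      (∫ t in (0:ℝ)..T, f t (v t) (deriv v t)) ≠ 0)
    (lam : ℝ) (hlam : lam ∈ Set.Icc (0:ℝ) 1)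
    (u : ℝ → ℝ) (hu : ContDiff ℝ 1 u)
    (Qv : ℝ) (hQv : Qv = (1 / T) * ∫ t in (0:ℝ)..T, f t (u t) (deriv u t))
    (heq : ∀ t ∈ Set.Icc (0:ℝ) T,
      HasDerivAt (fun s => φ (deriv u s))
        (lam * f t (u t) (deriv u t) + (1 - lam) * Qv) t)
    (hbc1 : u 0 = deriv u 0) (hbc2 : deriv u 0 = deriv u T) :
    ∃ ω ∈ Set.Icc (0:ℝ) T, M₁ < deriv u ω ∧ deriv u ω < M₂ :=
  stmt_4_general T hT φ f hf M₁ M₂ hM h1 h2 lam u hu Qv hQv heq hbc2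
end

section
/- Let a, T > 0, φ : ℝ → (-a,a) a homeomorphism with φ(0)=0, f : [0,T]×ℝ×ℝ → ℝ continuous, and c : [0,T] → ℝ continuous with f(t,x,y) ≥ c(t) for all (t,x,y). Suppose u : [0,T] → ℝ is C¹ with φ∘u' continuously differentiable, (φ(u'))' = λ N_f(u) for some λ ∈ [0,1], ∫₀ᵀ f(t,u(t),u'(t))dt = 0, and there exist M₁ < M₂ and ω ∈ [0,T] with M₁ < u'(ω) < M₂. Then for all t ∈ [0,T], |φ(u'(t))| < L + 2‖c⁻‖_{L¹}, where L = max{|φ(M₁)|, |φ(M₂)|} and c⁻ = max{-c, 0}. -/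
/-!
The Fundamental Theorem of Calculus bounds the oscillation of `φ ∘ u'` on `[0, T]` by
`∫₀ᵀ |λ N_f(u)| ≤ ∫₀ᵀ |N_f(u)|`. Since `N_f(u) ≥ c ≥ -c⁻`, we have `|N_f(u)| ≤ N_f(u) + 2 c⁻`, and
`∫₀ᵀ N_f(u) = 0` turns this into `∫₀ᵀ |N_f(u)| ≤ 2 ‖c⁻‖_{L¹}`. Finally `|φ(u'(ω))| < L` because
`φ`, a continuous injection, is strictly monotone and `u'(ω)` lies strictly between `M₁` and `M₂`.
-/

open MeasureTheory intervalIntegral Set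
open scoped Interval

lemma abs_lt_max_abs_abs_of_lt_of_lt {a b c : ℝ} (hab : a < b) (hbc : b < c) :
    |b| < max |a| |c| := by
  have := le_abs_self a; have := neg_abs_le a
  have := le_abs_self c; have := neg_abs_le c
  have := le_max_left |a| |c|; have := le_max_right |a| |c|
  rw [abs_lt]; constructor <;> linarith

lemma Continuous.abs_apply_lt_max_abs_of_injective {φ : ℝ → ℝ} (hφ : Continuous φ)
    (hinj : Function.Injective φ) {x y z : ℝ} (hxy : x < y) (hyz : y < z) :
    |φ y| < max |φ x| |φ z| := by
  rcases hφ.strictMono_of_inj hinj with hmono | hanti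
  · exact abs_lt_max_abs_abs_of_lt_of_lt (hmono hxy) (hmono hyz)
  · rw [max_comm]
    exact abs_lt_max_abs_abs_of_lt_of_lt (hanti hyz) (hanti hxy)

lemma integral_abs_le_integral_add_two_mul_integral_max_neg {a b : ℝ} {g c : ℝ → ℝ}
    (hab : a ≤ b) (hg : IntervalIntegrable g volume a b) (hc : ContinuousOn c (Icc a b))
    (hcg : ∀ s ∈ Icc a b, c s ≤ g s) :
    ∫ s in a..b, |g s| ≤ (∫ s in a..b, g s) + 2 * ∫ s in a..b, max (-c s) 0 := by
  have hc' : IntervalIntegrable (fun s => max (-c s) 0) volume a b := by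
    refine ContinuousOn.intervalIntegrable ?_
    rw [uIcc_of_le hab]
    exact hc.neg.sup continuousOn_const
  rw [← intervalIntegral.integral_const_mul, ← integral_add hg (hc'.const_mul 2)]
  refine integral_mono_on hab hg.abs (hg.add (hc'.const_mul 2)) fun s hs => ?_
  have := hcg s hs
  have := le_max_left (-c s) 0
  have := le_max_right (-c s) 0
  rcases abs_cases (g s) with ⟨h, _⟩ | ⟨h, _⟩ <;> rw [h] <;> linarith

lemma abs_integral_le_integral_of_abs_le {a b x y : ℝ} {h k : ℝ → ℝ}
    (hk : IntervalIntegrable k volume a b) (hhk : ∀ s ∈ Icc a b, |h s| ≤ k s)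
    (hx : x ∈ Icc a b) (hy : y ∈ Icc a b) :
    |∫ s in x..y, h s| ≤ ∫ s in a..b, k s := by
  have hab : a ≤ b := hx.1.trans hx.2
  have hsub : Ι x y ⊆ Ι a b :=
    uIoc_subset_uIoc_of_uIcc_subset_uIcc (uIcc_of_le hab ▸ uIcc_subset_Icc hx hy)
  have hIcc : Ι a b ⊆ Icc a b := uIoc_of_le hab ▸ Ioc_subset_Icc_self
  have hk_nonneg : 0 ≤ᵐ[volume.restrict (Icc a b)] k :=
    (ae_restrict_iff' measurableSet_Icc).2 <| .of_forall fun s hs =>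
      (abs_nonneg _).trans (hhk s hs)
  calc |∫ s in x..y, h s|
      ≤ |∫ s in x..y, k s| := by
        rw [← Real.norm_eq_abs]
        exact norm_integral_le_abs_of_norm_le
            ((ae_restrict_iff' measurableSet_uIoc).2 <| .of_forall fun s hs =>
              hhk s (hIcc (hsub hs)))
            (hk.mono_set (uIcc_of_le hab ▸ uIcc_subset_Icc hx hy))
    _ ≤ |∫ s in a..b, k s| :=
        abs_integral_mono_interval hsub (ae_restrict_of_ae_restrict_of_subset hIcc hk_nonneg) hk
    _ = ∫ s in a..b, k s := abs_of_nonneg (integral_nonneg_of_ae_restrict hab hk_nonneg)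

lemma abs_sub_le_integral_of_hasDerivAt {a b x y : ℝ} {F F' k : ℝ → ℝ}
    (hF : ∀ s ∈ Icc a b, HasDerivAt F (F' s) s) (hF' : IntervalIntegrable F' volume a b)
    (hk : IntervalIntegrable k volume a b) (hF'k : ∀ s ∈ Icc a b, |F' s| ≤ k s)
    (hx : x ∈ Icc a b) (hy : y ∈ Icc a b) :
    |F y - F x| ≤ ∫ s in a..b, k s := by
  have hab : a ≤ b := hx.1.trans hx.2
  rw [← integral_eq_sub_of_hasDerivAt (fun s hs => hF s (uIcc_subset_Icc hx hy hs))
    (hF'.mono_set (uIcc_of_le hab ▸ uIcc_subset_Icc hx hy))]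
  exact abs_integral_le_integral_of_abs_le hk hF'k hx hy

theorem stmt_5_general (T : ℝ) (hT : 0 < T)
    (φ ψ : ℝ → ℝ) (hφc : Continuous φ)
    (hinv1 : ∀ x, ψ (φ x) = x)
    (f : ℝ → ℝ → ℝ → ℝ)
    (hf : Continuous fun p : ℝ × ℝ × ℝ => f p.1 p.2.1 p.2.2)
    (c : ℝ → ℝ) (hc : ContinuousOn c (Set.Icc 0 T))
    (hfc : ∀ t ∈ Set.Icc (0:ℝ) T, ∀ x y : ℝ, c t ≤ f t x y)
    (lam : ℝ) (hlam : lam ∈ Set.Icc (0:ℝ) 1)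
    (u : ℝ → ℝ) (hu : ContDiff ℝ 1 u)
    (heq : ∀ t ∈ Set.Icc (0:ℝ) T,
      HasDerivAt (fun s => φ (deriv u s)) (lam * f t (u t) (deriv u t)) t)
    (hint : (∫ t in (0:ℝ)..T, f t (u t) (deriv u t)) = 0)
    (M₁ M₂ : ℝ)
    (ω : ℝ) (hω : ω ∈ Set.Icc (0:ℝ) T)
    (hω1 : M₁ < deriv u ω) (hω2 : deriv u ω < M₂) :
    ∀ t ∈ Set.Icc (0:ℝ) T,
      |φ (deriv u t)| <
        max |φ M₁| |φ M₂| + 2 * ∫ s in (0:ℝ)..T, max (-c s) 0 := by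
  intro t ht
  set g : ℝ → ℝ := fun s => f s (u s) (deriv u s)
  have hg : Continuous g :=
    hf.comp (continuous_id.prodMk (hu.continuous.prodMk (hu.continuous_deriv le_rfl)))
  have hφω : |φ (deriv u ω)| < max |φ M₁| |φ M₂| :=
    hφc.abs_apply_lt_max_abs_of_injective (Function.LeftInverse.injective hinv1) hω1 hω2
  have hosc : |φ (deriv u t) - φ (deriv u ω)| ≤ ∫ s in (0:ℝ)..T, |g s| := by
    refine abs_sub_le_integral_of_hasDerivAt (F := fun s => φ (deriv u s)) heq
      ((continuous_const.mul hg).intervalIntegrable _ _) (hg.abs.intervalIntegrable _ _)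
      (fun s _ => ?_) hω ht
    rw [abs_mul, abs_of_nonneg hlam.1]
    exact mul_le_of_le_one_left (abs_nonneg _) hlam.2
  have hg_abs : ∫ s in (0:ℝ)..T, |g s| ≤ 2 * ∫ s in (0:ℝ)..T, max (-c s) 0 := by
    simpa only [hint, zero_add] using integral_abs_le_integral_add_two_mul_integral_max_neg
      hT.le (hg.intervalIntegrable _ _) hc fun s hs => hfc s hs _ _
  linarith [abs_sub_abs_le_abs_sub (φ (deriv u t)) (φ (deriv u ω))]

theorem stmt_5 (a T : ℝ) (ha : 0 < a) (hT : 0 < T)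
    (φ ψ : ℝ → ℝ) (hφc : Continuous φ) (hψc : Continuous ψ)
    (hmem : ∀ x, φ x ∈ Set.Ioo (-a) a)
    (hinv1 : ∀ x, ψ (φ x) = x)
    (hinv2 : ∀ y ∈ Set.Ioo (-a) a, φ (ψ y) = y)
    (hφ0 : φ 0 = 0)
    (f : ℝ → ℝ → ℝ → ℝ)
    (hf : Continuous fun p : ℝ × ℝ × ℝ => f p.1 p.2.1 p.2.2)
    (c : ℝ → ℝ) (hc : ContinuousOn c (Set.Icc 0 T))
    (hfc : ∀ t ∈ Set.Icc (0:ℝ) T, ∀ x y : ℝ, c t ≤ f t x y)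
    (lam : ℝ) (hlam : lam ∈ Set.Icc (0:ℝ) 1)
    (u : ℝ → ℝ) (hu : ContDiff ℝ 1 u)
    (heq : ∀ t ∈ Set.Icc (0:ℝ) T,
      HasDerivAt (fun s => φ (deriv u s)) (lam * f t (u t) (deriv u t)) t)
    (hint : (∫ t in (0:ℝ)..T, f t (u t) (deriv u t)) = 0)
    (M₁ M₂ : ℝ) (hM : M₁ < M₂)
    (ω : ℝ) (hω : ω ∈ Set.Icc (0:ℝ) T)
    (hω1 : M₁ < deriv u ω) (hω2 : deriv u ω < M₂) :
    ∀ t ∈ Set.Icc (0:ℝ) T,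
      |φ (deriv u t)| <
        max |φ M₁| |φ M₂| + 2 * ∫ s in (0:ℝ)..T, max (-c s) 0 :=
  stmt_5_general T hT φ ψ hφc hinv1 f hf c hc hfc lam hlam u hu heq hint M₁ M₂ ω hω hω1 hω2
end

section
/- Let a, T > 0, φ : ℝ → (-a,a) a homeomorphism with φ(0)=0, f continuous, c continuous with f ≥ c pointwise, M₁ < M₂ with L = max{|φ(M₁)|,|φ(M₂)|} satisfying L + 2‖c⁻‖_{L¹} < a, and assume condition (1) of Lemma 3.2 (nonvanishing integrals when min u' ≥ M₂ or max u' ≤ M₁). If u ∈ C¹ solves (φ(u'))' = λ N_f(u) + (1-λ)Q(N_f(u)), u(0)=u'(0)=u'(T), for some λ ∈ [0,1], then ‖u‖_∞ + ‖u'‖_∞ < r(2+T) where r = max{|φ⁻¹(L + 2‖c⁻‖_{L¹})|, |φ⁻¹(-(L + 2‖c⁻‖_{L¹}))|}. -/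
open MeasureTheory intervalIntegral Set

/-!
Integrating the equation over `[0, T]`, the boundary condition `u'(0) = u'(T)` forces
`∫ N_f(u) = 0`, so `Q(N_f(u)) = 0`; together with `N_f(u) ≥ -c⁻` this bounds every partial
integral of `N_f(u)` by `‖c⁻‖_{L¹}`. Condition (1) and the intermediate value theorem give `τ`
with `M₁ < u'(τ) < M₂`, hence `|φ(u'(τ))| < L`, and integrating from `τ` gives
`|φ(u')| < L + ‖c⁻‖_{L¹} ≤ L + 2‖c⁻‖_{L¹}`. Since `φ` is strictly monotone, this inverts to
`|u'| < r`, and `u(0) = u'(0)` turns it into the bound on `u`.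
-/

lemma abs_lt_max_abs_of_mem_uIoo {x a b : ℝ} (h : x ∈ uIoo a b) : |x| < max |a| |b| := by
  rcases le_total a b with hab | hab <;>
    simp only [uIoo_of_le, uIoo_of_ge, hab, mem_Ioo] at h <;>
    rw [abs_lt] <;> constructor <;>
    linarith [le_abs_self a, neg_abs_le a, le_abs_self b, neg_abs_le b,
      le_max_left |a| |b|, le_max_right |a| |b|]

lemma mem_uIoo_iff_of_strictMono_or_strictAnti {α β : Type*} [LinearOrder α] [LinearOrder β]
    {φ : α → β} (hφ : StrictMono φ ∨ StrictAnti φ) {x a b : α} :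
    φ x ∈ uIoo (φ a) (φ b) ↔ x ∈ uIoo a b := by
  rcases hφ with hφ | hφ
  · simp only [uIoo_eq_union, mem_union, mem_Ioo, hφ.lt_iff_lt]
  · simp only [uIoo_eq_union, mem_union, mem_Ioo, hφ.lt_iff_gt]
    tauto

lemma exists_mem_Ioo_of_not_forall {v : ℝ → ℝ} {a b M₁ M₂ : ℝ} (hv : ContinuousOn v (Icc a b))
    (hM : M₁ < M₂) (hup : ¬ ∀ t ∈ Icc a b, M₂ ≤ v t) (hlow : ¬ ∀ t ∈ Icc a b, v t ≤ M₁) :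
    ∃ τ ∈ Icc a b, v τ ∈ Ioo M₁ M₂ := by
  push Not at hup hlow
  obtain ⟨t₂, ht₂, hv₂⟩ := hup
  obtain ⟨t₁, ht₁, hv₁⟩ := hlow
  by_cases h₂ : M₁ < v t₂
  · exact ⟨t₂, ht₂, h₂, hv₂⟩
  by_cases h₁ : v t₁ < M₂
  · exact ⟨t₁, ht₁, hv₁, h₁⟩
  have hmid : (M₁ + M₂) / 2 ∈ uIcc (v t₂) (v t₁) :=
    mem_uIcc_of_le (by linarith) (by linarith)
  obtain ⟨τ, hτ, hvτ⟩ := intermediate_value_uIcc (hv.mono (uIcc_subset_Icc ht₂ ht₁)) hmid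
  exact ⟨τ, uIcc_subset_Icc ht₂ ht₁ hτ, by rw [hvτ]; constructor <;> linarith⟩

lemma integral_eq_zero_of_hasDerivAt_of_periodic {g F : ℝ → ℝ} {T lam : ℝ} (hT : 0 < T)
    (hF : IntervalIntegrable F volume 0 T)
    (hg : ∀ t ∈ Icc 0 T,
      HasDerivAt g (lam * F t + (1 - lam) * ((1 / T) * ∫ s in 0..T, F s)) t)
    (hper : g 0 = g T) : ∫ t in 0..T, F t = 0 := by
  set I := ∫ s in 0..T, F s
  have hint := integral_eq_sub_of_hasDerivAt (fun t ht => hg t (uIcc_of_le hT.le ▸ ht))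
    ((hF.const_mul lam).add intervalIntegrable_const)
  rw [hper, sub_self, integral_add (hF.const_mul lam) intervalIntegrable_const,
    intervalIntegral.integral_const_mul, intervalIntegral.integral_const, smul_eq_mul] at hint
  have hTI : (T - 0) * ((1 - lam) * (1 / T * I)) = (1 - lam) * I := by
    field_simp; ring
  linarith

lemma abs_integral_le_of_integral_eq_zero {F k : ℝ → ℝ} {a b : ℝ}
    (hF : IntervalIntegrable F volume a b) (hk : IntervalIntegrable k volume a b)
    (hk0 : ∀ t ∈ Icc a b, 0 ≤ k t) (hFk : ∀ t ∈ Icc a b, -k t ≤ F t)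
    (hI : ∫ t in a..b, F t = 0) {p q : ℝ} (hp : p ∈ Icc a b) (hq : q ∈ Icc a b) :
    |∫ t in p..q, F t| ≤ ∫ t in a..b, k t := by
  wlog hpq : p ≤ q generalizing p q
  · rw [integral_symm, abs_neg]
    exact this hq hp (le_of_not_ge hpq)
  have hab : a ≤ b := hp.1.trans hp.2
  have hsub : ∀ {x y}, x ∈ Icc a b → y ∈ Icc a b → uIcc x y ⊆ uIcc a b := fun hx hy =>
    uIcc_subset_uIcc (uIcc_of_le hab ▸ hx) (uIcc_of_le hab ▸ hy)
  have hFi : ∀ {x y}, x ∈ Icc a b → y ∈ Icc a b → IntervalIntegrable F volume x y :=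
    fun hx hy => hF.mono_set (hsub hx hy)
  have hki : ∀ {x y}, x ∈ Icc a b → y ∈ Icc a b → IntervalIntegrable k volume x y :=
    fun hx hy => hk.mono_set (hsub hx hy)
  have hlow : ∀ {x y}, x ∈ Icc a b → y ∈ Icc a b → x ≤ y →
      -∫ t in x..y, k t ≤ ∫ t in x..y, F t := fun hx hy hxy => by
    rw [← intervalIntegral.integral_neg]
    exact integral_mono_on hxy (hki hx hy).neg (hFi hx hy)
      fun t ht => hFk t ⟨hx.1.trans ht.1, ht.2.trans hy.2⟩
  have ha : a ∈ Icc a b := left_mem_Icc.2 hab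
  have hb : b ∈ Icc a b := right_mem_Icc.2 hab
  have hsplit : ∀ G : ℝ → ℝ, IntervalIntegrable G volume a b →
      ∫ t in a..b, G t = (∫ t in a..p, G t) + (∫ t in p..q, G t) + ∫ t in q..b, G t :=
    fun G hG => by
      rw [integral_add_adjacent_intervals (hG.mono_set (hsub ha hp)) (hG.mono_set (hsub hp hq)),
        integral_add_adjacent_intervals (hG.mono_set (hsub ha hq)) (hG.mono_set (hsub hq hb))]
  have hkpos : ∀ {x y}, x ∈ Icc a b → y ∈ Icc a b → x ≤ y → 0 ≤ ∫ t in x..y, k t :=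
    fun hx hy hxy => integral_nonneg hxy fun t ht => hk0 t ⟨hx.1.trans ht.1, ht.2.trans hy.2⟩
  -- the upper bound trades `∫ p..q` for the two complementary pieces, using `∫ a..b, F = 0`
  rw [abs_le]
  constructor <;> linarith [hsplit F hF, hsplit k hk, hlow ha hp hp.1, hlow hp hq hpq,
    hlow hq hb hq.2, hkpos ha hp hp.1, hkpos hp hq hpq, hkpos hq hb hq.2]

lemma abs_sub_le_of_hasDerivAt_mul {g F : ℝ → ℝ} {a b lam C : ℝ} (hF : Continuous F)
    (hlam : |lam| ≤ 1) (hg : ∀ t ∈ Icc a b, HasDerivAt g (lam * F t) t)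
    (hC : ∀ p ∈ Icc a b, ∀ q ∈ Icc a b, |∫ t in p..q, F t| ≤ C)
    {p q : ℝ} (hp : p ∈ Icc a b) (hq : q ∈ Icc a b) : |g q - g p| ≤ C := by
  rw [← integral_eq_sub_of_hasDerivAt (fun t ht => hg t (uIcc_subset_Icc hp hq ht))
      ((hF.intervalIntegrable p q).const_mul lam),
    intervalIntegral.integral_const_mul, abs_mul]
  exact (mul_le_of_le_one_left (abs_nonneg _) hlam).trans (hC p hp q hq)

lemma abs_add_abs_deriv_lt {u : ℝ → ℝ} {T r : ℝ} (hT : 0 ≤ T) (hu : ContDiff ℝ 1 u)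
    (hu0 : u 0 = deriv u 0) (hr : ∀ s ∈ Icc 0 T, |deriv u s| < r) :
    ∀ t ∈ Icc 0 T, ∀ s ∈ Icc 0 T, |u t| + |deriv u s| < r * (2 + T) := by
  intro t ht s hs
  have hu' : Continuous (deriv u) := hu.continuous_deriv le_rfl
  obtain ⟨s₀, hs₀, hmax⟩ :=
    isCompact_Icc.exists_isMaxOn (nonempty_Icc.2 hT) hu'.abs.continuousOn
  set m := |deriv u s₀|
  have hm : ∀ s ∈ Icc 0 T, |deriv u s| ≤ m := fun s hs => hmax hs
  have hdiff : |u t - u 0| ≤ m * (t - 0) :=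
    norm_image_sub_le_of_norm_deriv_le_segment'
      (fun x _ => ((hu.differentiable one_ne_zero).differentiableAt).hasDerivAt.hasDerivWithinAt)
      (fun x hx => hm x (Ico_subset_Icc_self hx)) t ht
  have hmT : m * (t - 0) ≤ m * T := by
    rw [sub_zero]; exact mul_le_mul_of_nonneg_left ht.2 (abs_nonneg _)
  calc |u t| + |deriv u s| ≤ (|u 0| + |u t - u 0|) + m := by
        gcongr
        · linarith [abs_sub_abs_le_abs_sub (u t) (u 0)]
        · exact hm s hs
    _ ≤ (m + m * T) + m := by
        gcongr
        · exact hu0 ▸ hm 0 (left_mem_Icc.2 hT)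
        · exact hdiff.trans hmT
    _ = m * (2 + T) := by ring
    _ < r * (2 + T) := by gcongr; exact hr s₀ hs₀

theorem stmt_8_general (a T : ℝ) (hT : 0 < T)
    (φ ψ : ℝ → ℝ) (hφc : Continuous φ)
    (hinv1 : ∀ x, ψ (φ x) = x)
    (hinv2 : ∀ y ∈ Set.Ioo (-a) a, φ (ψ y) = y)
    (f : ℝ → ℝ → ℝ → ℝ)
    (hf : Continuous fun p : ℝ × ℝ × ℝ => f p.1 p.2.1 p.2.2)
    (c : ℝ → ℝ) (hc : ContinuousOn c (Set.Icc 0 T))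
    (hfc : ∀ t ∈ Set.Icc (0:ℝ) T, ∀ x y : ℝ, c t ≤ f t x y)
    (M₁ M₂ : ℝ) (hM : M₁ < M₂)
    (L : ℝ) (hL : L = max |φ M₁| |φ M₂|)
    (hLa : L + 2 * (∫ t in (0:ℝ)..T, max (-c t) 0) < a)
    -- condition (1) of Lemma 3.2
    (h1 : ∀ v : ℝ → ℝ, ContDiff ℝ 1 v → (∀ t ∈ Set.Icc (0:ℝ) T, M₂ ≤ deriv v t) →
      (∫ t in (0:ℝ)..T, f t (v t) (deriv v t)) ≠ 0)
    (h2 : ∀ v : ℝ → ℝ, ContDiff ℝ 1 v → (∀ t ∈ Set.Icc (0:ℝ) T, deriv v t ≤ M₁) →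
      (∫ t in (0:ℝ)..T, f t (v t) (deriv v t)) ≠ 0)
    (lam : ℝ) (hlam : lam ∈ Set.Icc (0:ℝ) 1)
    (u : ℝ → ℝ) (hu : ContDiff ℝ 1 u)
    (Qv : ℝ) (hQv : Qv = (1 / T) * ∫ t in (0:ℝ)..T, f t (u t) (deriv u t))
    (heq : ∀ t ∈ Set.Icc (0:ℝ) T,
      HasDerivAt (fun s => φ (deriv u s))
        (lam * f t (u t) (deriv u t) + (1 - lam) * Qv) t)
    (hbc1 : u 0 = deriv u 0) (hbc2 : deriv u 0 = deriv u T)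
    (r : ℝ)
    (hrdef : r = max |ψ (L + 2 * ∫ t in (0:ℝ)..T, max (-c t) 0)|
                   |ψ (-(L + 2 * ∫ t in (0:ℝ)..T, max (-c t) 0))|) :
    ∀ t ∈ Set.Icc (0:ℝ) T, ∀ s ∈ Set.Icc (0:ℝ) T,
      |u t| + |deriv u s| < r * (2 + T) := by
  subst hQv hL hrdef
  set F := fun t => f t (u t) (deriv u t)
  set C := ∫ t in (0:ℝ)..T, max (-c t) 0
  set ρ := max |φ M₁| |φ M₂| + 2 * C
  have hF : Continuous F := hf.comp (continuous_id.prodMk (hu.continuous.prodMk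
    (hu.continuous_deriv le_rfl)))
  have hk : IntervalIntegrable (fun t => max (-c t) 0) volume 0 T :=
    (hc.neg.sup continuousOn_const).intervalIntegrable_of_Icc hT.le
  have hI : ∫ t in (0:ℝ)..T, F t = 0 :=
    integral_eq_zero_of_hasDerivAt_of_periodic hT (hF.intervalIntegrable 0 T) heq
      (congrArg φ hbc2)
  have hFC : ∀ p ∈ Icc 0 T, ∀ q ∈ Icc 0 T, |∫ t in p..q, F t| ≤ C := fun p hp q hq =>
    abs_integral_le_of_integral_eq_zero (hF.intervalIntegrable 0 T) hk
      (fun t _ => le_max_right _ _)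
      (fun t ht => (neg_le.1 (le_max_left _ _)).trans (hfc t ht _ _)) hI hp hq
  obtain ⟨τ, hτ, hτM⟩ := exists_mem_Ioo_of_not_forall (hu.continuous_deriv le_rfl).continuousOn
    hM (fun h => h1 u hu h hI) (fun h => h2 u hu h hI)
  have hφ : StrictMono φ ∨ StrictAnti φ :=
    hφc.strictMono_of_inj (Function.LeftInverse.injective hinv1)
  have hC : 0 ≤ C := integral_nonneg hT.le fun t _ => le_max_right _ _
  have hgρ : ∀ s ∈ Icc 0 T, |φ (deriv u s)| < ρ := fun s hs => by
    have hτL := abs_lt_max_abs_of_mem_uIoo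
      ((mem_uIoo_iff_of_strictMono_or_strictAnti hφ).2 (Ioo_subset_uIoo hτM))
    have hsτ := abs_sub_le_of_hasDerivAt_mul hF (abs_le.2 ⟨by linarith [hlam.1], hlam.2⟩)
      (fun t ht => by simpa [hI] using heq t ht) hFC hτ hs
    linarith [abs_sub_abs_le_abs_sub (φ (deriv u s)) (φ (deriv u τ))]
  have hρ : 0 ≤ ρ := by positivity
  refine abs_add_abs_deriv_lt hT.le hu hbc1 fun s hs => abs_lt_max_abs_of_mem_uIoo
    ((mem_uIoo_iff_of_strictMono_or_strictAnti hφ).1 ?_)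
  rw [hinv2 ρ ⟨by linarith, hLa⟩, hinv2 (-ρ) ⟨by linarith, by linarith⟩]
  exact mem_uIoo_of_gt (abs_lt.1 (hgρ s hs)).1 (abs_lt.1 (hgρ s hs)).2

theorem stmt_8 (a T : ℝ) (ha : 0 < a) (hT : 0 < T)
    (φ ψ : ℝ → ℝ) (hφc : Continuous φ) (hψc : Continuous ψ)
    (hmem : ∀ x, φ x ∈ Set.Ioo (-a) a)
    (hinv1 : ∀ x, ψ (φ x) = x)
    (hinv2 : ∀ y ∈ Set.Ioo (-a) a, φ (ψ y) = y)
    (hφ0 : φ 0 = 0)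
    (f : ℝ → ℝ → ℝ → ℝ)
    (hf : Continuous fun p : ℝ × ℝ × ℝ => f p.1 p.2.1 p.2.2)
    (c : ℝ → ℝ) (hc : ContinuousOn c (Set.Icc 0 T))
    (hfc : ∀ t ∈ Set.Icc (0:ℝ) T, ∀ x y : ℝ, c t ≤ f t x y)
    (M₁ M₂ : ℝ) (hM : M₁ < M₂)
    (L : ℝ) (hL : L = max |φ M₁| |φ M₂|)
    (hLa : L + 2 * (∫ t in (0:ℝ)..T, max (-c t) 0) < a)
    -- condition (1) of Lemma 3.2
    (h1 : ∀ v : ℝ → ℝ, ContDiff ℝ 1 v → (∀ t ∈ Set.Icc (0:ℝ) T, M₂ ≤ deriv v t) →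
      (∫ t in (0:ℝ)..T, f t (v t) (deriv v t)) ≠ 0)
    (h2 : ∀ v : ℝ → ℝ, ContDiff ℝ 1 v → (∀ t ∈ Set.Icc (0:ℝ) T, deriv v t ≤ M₁) →
      (∫ t in (0:ℝ)..T, f t (v t) (deriv v t)) ≠ 0)
    (lam : ℝ) (hlam : lam ∈ Set.Icc (0:ℝ) 1)
    (u : ℝ → ℝ) (hu : ContDiff ℝ 1 u)
    (Qv : ℝ) (hQv : Qv = (1 / T) * ∫ t in (0:ℝ)..T, f t (u t) (deriv u t))
    (heq : ∀ t ∈ Set.Icc (0:ℝ) T,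
      HasDerivAt (fun s => φ (deriv u s))
        (lam * f t (u t) (deriv u t) + (1 - lam) * Qv) t)
    (hbc1 : u 0 = deriv u 0) (hbc2 : deriv u 0 = deriv u T)
    (r : ℝ)
    (hrdef : r = max |ψ (L + 2 * ∫ t in (0:ℝ)..T, max (-c t) 0)|
                   |ψ (-(L + 2 * ∫ t in (0:ℝ)..T, max (-c t) 0))|) :
    ∀ t ∈ Set.Icc (0:ℝ) T, ∀ s ∈ Set.Icc (0:ℝ) T,
      |u t| + |deriv u s| < r * (2 + T) :=
  stmt_8_general a T hT φ ψ hφc hinv1 hinv2 f hf c hc hfc M₁ M₂ hM L hL hLa h1 h2 lam hlam u hu Qv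
    hQv heq hbc1 hbc2 r hrdef
end

section
/- Let a, T > 0, φ : ℝ → (-a,a) a homeomorphism with φ(0)=0, f : [0,T]×ℝ×ℝ → ℝ continuous with |f(t,x,y)| ≤ c < a/(2T) for all (t,x,y) and some constant c. Suppose u ∈ C¹([0,T]) with φ∘u' continuously differentiable solves (φ(u'))' = λ f(t,u,u'), u(0)=u(T)=u'(T), for some λ ∈ [0,1], and that φ(u'(t)) = λ K(N_f(u))(t) - Q_φ(λ K(N_f(u))) where K(v)(t) = -∫ₜᵀ v(s)ds and Q_φ(h) lies in the range of h. Then ‖φ∘u'‖_∞ ≤ 2cT < a and ‖u'‖_∞ ≤ L, where L = max{|φ⁻¹(2cT)|, |φ⁻¹(-2cT)|}. -/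
open MeasureTheory intervalIntegral Set

/-! The representation gives `φ(u'(t)) = h(t) - h(t₀)` with `h = λ K(N_f(u))`, and
`|h| ≤ cT` because `|f| ≤ c` and `0 ≤ λ ≤ 1`; hence `|φ(u')| ≤ 2cT < a`. Since `φ` is a
continuous injection it is strictly monotone, so `u'(t)` lies between `φ⁻¹(-2cT)` and
`φ⁻¹(2cT)`. -/

theorem abs_mul_neg_integral_le {g : ℝ → ℝ} {a b c lam t : ℝ} (hlam : lam ∈ Icc (0 : ℝ) 1)
    (hg : ∀ s ∈ Icc a b, |g s| ≤ c) (ht : t ∈ Icc a b) :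
    |lam * -∫ s in t..b, g s| ≤ c * (b - a) := by
  have hc : 0 ≤ c := (abs_nonneg _).trans (hg t ht)
  have hint : ‖∫ s in t..b, g s‖ ≤ c * |b - t| :=
    intervalIntegral.norm_integral_le_of_norm_le_const fun s hs => by
      rw [uIoc_of_le ht.2] at hs
      exact hg s ⟨ht.1.trans hs.1.le, hs.2⟩
  have hlam' : |lam| ≤ 1 := abs_le.mpr ⟨by linarith [hlam.1], hlam.2⟩
  calc |lam * -∫ s in t..b, g s| = |lam| * |∫ s in t..b, g s| := by rw [abs_mul, abs_neg]
    _ ≤ 1 * (c * |b - t|) := mul_le_mul hlam' hint (abs_nonneg _) zero_le_one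
    _ ≤ c * (b - a) := by
      rw [one_mul, abs_of_nonneg (sub_nonneg.mpr ht.2)]
      exact mul_le_mul_of_nonneg_left (by linarith [ht.1]) hc

theorem abs_sub_le_two_mul_of_mem_image {α : Type*} {h : α → ℝ} {s : Set α} {M Q : ℝ}
    (hM : ∀ t ∈ s, |h t| ≤ M) (hQ : Q ∈ h '' s) {t : α} (ht : t ∈ s) :
    |h t - Q| ≤ 2 * M := by
  obtain ⟨t₀, ht₀, rfl⟩ := hQ
  linarith [abs_sub (h t) (h t₀), hM t ht, hM t₀ ht₀]

theorem abs_le_max_abs_of_abs_apply_le {φ : ℝ → ℝ} {a b x M : ℝ} (hφ : Continuous φ)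
    (hinj : Function.Injective φ) (ha : φ a = -M) (hb : φ b = M) (hx : |φ x| ≤ M) :
    |x| ≤ max |b| |a| := by
  obtain ⟨hxa, hxb⟩ := abs_le.mp hx
  rcases hφ.strictMono_of_inj hinj with hmono | hanti
  · rw [max_comm]
    exact abs_le_max_abs_abs (hmono.le_iff_le.mp (ha ▸ hxa)) (hmono.le_iff_le.mp (hb ▸ hxb))
  · exact abs_le_max_abs_abs (hanti.le_iff_ge.mp (hb ▸ hxb)) (hanti.le_iff_ge.mp (ha ▸ hxa))

theorem stmt_12_general (a T : ℝ) (hT : 0 < T)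
    (φ ψ : ℝ → ℝ) (hφc : Continuous φ)
    (hinv1 : ∀ x, ψ (φ x) = x)
    (hinv2 : ∀ y ∈ Set.Ioo (-a) a, φ (ψ y) = y)
    (f : ℝ → ℝ → ℝ → ℝ)
    (c : ℝ) (hc : c < a / (2 * T))
    (hfb : ∀ t ∈ Set.Icc (0:ℝ) T, ∀ x y : ℝ, |f t x y| ≤ c)
    (lam : ℝ) (hlam : lam ∈ Set.Icc (0:ℝ) 1)
    (u : ℝ → ℝ)
    -- the representation φ(u'(t)) = λ K(N_f(u))(t) - Q_φ(λ K(N_f(u)))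
    (Q₀ : ℝ)
    (hQ₀mem : Q₀ ∈ (fun t => lam * (-(∫ s in t..T, f s (u s) (deriv u s)))) ''
      Set.Icc (0:ℝ) T)
    (hrep : ∀ t ∈ Set.Icc (0:ℝ) T,
      φ (deriv u t) = lam * (-(∫ s in t..T, f s (u s) (deriv u s))) - Q₀) :
    (∀ t ∈ Set.Icc (0:ℝ) T, |φ (deriv u t)| ≤ 2 * c * T) ∧
    2 * c * T < a ∧
    (∀ t ∈ Set.Icc (0:ℝ) T,
      |deriv u t| ≤ max |ψ (2 * c * T)| |ψ (-(2 * c * T))|) := by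
  have hc0 : 0 ≤ c := (abs_nonneg _).trans (hfb 0 ⟨le_rfl, hT.le⟩ 0 0)
  have h2cT : 2 * c * T < a := by
    have := (lt_div_iff₀ (by positivity : (0:ℝ) < 2 * T)).mp hc
    linarith
  have hK : ∀ t ∈ Icc (0:ℝ) T, |lam * -∫ s in t..T, f s (u s) (deriv u s)| ≤ c * T :=
    fun t ht => by
      simpa using abs_mul_neg_integral_le hlam (fun s hs => hfb s hs _ _) ht
  have hφu : ∀ t ∈ Icc (0:ℝ) T, |φ (deriv u t)| ≤ 2 * c * T := fun t ht => by
    rw [hrep t ht, mul_assoc]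
    exact abs_sub_le_two_mul_of_mem_image hK hQ₀mem ht
  have hpos : 2 * c * T ∈ Ioo (-a) a := ⟨by nlinarith, h2cT⟩
  have hneg : -(2 * c * T) ∈ Ioo (-a) a := ⟨by linarith, by nlinarith⟩
  exact ⟨hφu, h2cT, fun t ht => abs_le_max_abs_of_abs_apply_le hφc
    (Function.LeftInverse.injective hinv1) (hinv2 _ hneg) (hinv2 _ hpos) (hφu t ht)⟩

theorem stmt_12 (a T : ℝ) (ha : 0 < a) (hT : 0 < T)
    (φ ψ : ℝ → ℝ) (hφc : Continuous φ) (hψc : Continuous ψ)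
    (hmem : ∀ x, φ x ∈ Set.Ioo (-a) a)
    (hinv1 : ∀ x, ψ (φ x) = x)
    (hinv2 : ∀ y ∈ Set.Ioo (-a) a, φ (ψ y) = y)
    (hφ0 : φ 0 = 0)
    (f : ℝ → ℝ → ℝ → ℝ)
    (hf : Continuous fun p : ℝ × ℝ × ℝ => f p.1 p.2.1 p.2.2)
    (c : ℝ) (hc : c < a / (2 * T))
    (hfb : ∀ t ∈ Set.Icc (0:ℝ) T, ∀ x y : ℝ, |f t x y| ≤ c)
    (lam : ℝ) (hlam : lam ∈ Set.Icc (0:ℝ) 1)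
    (u : ℝ → ℝ) (hu : ContDiff ℝ 1 u)
    (heq : ∀ t ∈ Set.Icc (0:ℝ) T,
      HasDerivAt (fun s => φ (deriv u s)) (lam * f t (u t) (deriv u t)) t)
    (hbc1 : u 0 = u T) (hbc2 : u T = deriv u T)
    -- the representation φ(u'(t)) = λ K(N_f(u))(t) - Q_φ(λ K(N_f(u)))
    (Q₀ : ℝ)
    (hQ₀mem : Q₀ ∈ (fun t => lam * (-(∫ s in t..T, f s (u s) (deriv u s)))) ''
      Set.Icc (0:ℝ) T)
    (hrep : ∀ t ∈ Set.Icc (0:ℝ) T,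
      φ (deriv u t) = lam * (-(∫ s in t..T, f s (u s) (deriv u s))) - Q₀) :
    (∀ t ∈ Set.Icc (0:ℝ) T, |φ (deriv u t)| ≤ 2 * c * T) ∧
    2 * c * T < a ∧
    (∀ t ∈ Set.Icc (0:ℝ) T,
      |deriv u t| ≤ max |ψ (2 * c * T)| |ψ (-(2 * c * T))|) :=
  stmt_12_general a T hT φ ψ hφc hinv1 hinv2 f c hc hfb lam hlam u Q₀ hQ₀mem hrep
end
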